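/- Let σ ∈ Stmt^ω, X ∈ (2^{ρ∪υ})^ω and ζ a computation with ζ ◁ combine(σ, X). Then the reduced computation ζ|σ matches σ, i.e. ζ|σ ◁ σ. -/

import Mathlib

namespace TSLMC

open scoped Classical

/-! ### Theories, function terms, assignments -/

/-- A theory: interpretation of function symbols, plus distinguished values true/false. -/
structure Thy (V F : Type) where
  ε : F → List V → V
  vtrue : V
  vfalse : V

/-- Function terms over inputs `I`, cells `C` and function symbols `F`. -/
inductive FTerm (I C F : Type) : Type where
  | inp  : I → FTerm I C F
  | cell : C → FTerm I C F
  | app  : F → List (FTerm I C F) → FTerm I C F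

/-- An assignment gives values to inputs and cells. -/
abbrev Assign (V I C : Type) := I ⊕ C → V

variable {V I C F Pi : Type}

/-- Evaluation of a function term under an assignment. -/
def FTerm.eval (T : Thy V F) (a : Assign V I C) : FTerm I C F → V
  | .inp i => a (.inl i)
  | .cell c => a (.inr c)
  | .app f ts => T.ε f (ts.attach.map fun t => t.1.eval T a)
decreasing_by
  have := List.sizeOf_lt_of_mem t.2
  simp only [FTerm.app.sizeOf_spec]
  omega

/-- A predicate term is a function term evaluating only to true or false. -/
def IsPredTerm (T : Thy V F) (τ : FTerm I C F) : Prop :=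
  ∀ a : Assign V I C, τ.eval T a = T.vtrue ∨ τ.eval T a = T.vfalse

/-- The theory contains (at least) equality, negation, conjunction and a true constant,
with their usual interpretations, and true ≠ false. -/
structure Ops (V F : Type) (T : Thy V F) where
  feq : F
  fneg : F
  fand : F
  ftrue : F
  heq : ∀ x y : V, T.ε feq [x, y] = if x = y then T.vtrue else T.vfalse
  hneg : ∀ x : V, T.ε fneg [x] = if x = T.vtrue then T.vfalse else T.vtrue
  hand : ∀ x y : V, T.ε fand [x, y] = if x = T.vtrue ∧ y = T.vtrue then T.vtrue else T.vfalse
  htrue : T.ε ftrue [] = T.vtrue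
  tne : T.vtrue ≠ T.vfalse

/-! ### TSL(T) formulas -/

/-- TSL(T) formulas (atoms: predicate terms and update terms `⟦c ↞ τ⟧`). -/
inductive TSL (I C F : Type) : Type where
  | pred : FTerm I C F → TSL I C F
  | upd  : C → FTerm I C F → TSL I C F
  | not  : TSL I C F → TSL I C F
  | and  : TSL I C F → TSL I C F → TSL I C F
  | next : TSL I C F → TSL I C F
  | untl : TSL I C F → TSL I C F → TSL I C F

/-- `prevA init ζ t` is `ζ (t-1)`, with the fixed initial assignment at `t = 0`. -/
def prevA (init : Assign V I C) (ζ : ℕ → Assign V I C) : ℕ → Assign V I C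
  | 0 => init
  | t + 1 => ζ t

/-- Satisfaction of a TSL(T) formula over a computation at a time point. -/
def TSL.sat (T : Thy V F) (init : Assign V I C) (ζ : ℕ → Assign V I C) :
    TSL I C F → ℕ → Prop
  | .pred τ, t => τ.eval T (ζ t) = T.vtrue
  | .upd c τ, t => τ.eval T (prevA init ζ t) = ζ t (.inr c)
  | .not φ, t => ¬ φ.sat T init ζ t
  | .and φ ψ, t => φ.sat T init ζ t ∧ ψ.sat T init ζ t
  | .next φ, t => φ.sat T init ζ (t + 1)
  | .untl φ ψ, t => ∃ t', t ≤ t' ∧ ψ.sat T init ζ t' ∧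
      ∀ t'', t ≤ t'' → t'' < t' → φ.sat T init ζ t''

/-- The list of predicate terms appearing in a TSL(T) formula. -/
def TSL.predList : TSL I C F → List (FTerm I C F)
  | .pred τ => [τ]
  | .upd _ _ => []
  | .not φ => φ.predList
  | .and φ ψ => φ.predList ++ ψ.predList
  | .next φ => φ.predList
  | .untl φ ψ => φ.predList ++ ψ.predList

/-- The list of update terms appearing in a TSL(T) formula. -/
def TSL.updList : TSL I C F → List (C × FTerm I C F)
  | .pred _ => []
  | .upd c τ => [(c, τ)]
  | .not φ => φ.updList
  | .and φ ψ => φ.updList ++ ψ.updList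
  | .next φ => φ.updList
  | .untl φ ψ => φ.updList ++ ψ.updList

/-! ### LTL -/

/-- LTL formulas over atomic propositions `A`. -/
inductive LTL (A : Type) : Type where
  | atom : A → LTL A
  | not : LTL A → LTL A
  | and : LTL A → LTL A → LTL A
  | next : LTL A → LTL A
  | untl : LTL A → LTL A → LTL A

/-- Standard LTL satisfaction over words of sets of atomic propositions. -/
def LTL.sat (w : ℕ → Set A) : LTL A → ℕ → Prop
  | .atom a, t => a ∈ w t
  | .not φ, t => ¬ φ.sat w t
  | .and φ ψ, t => φ.sat w t ∧ ψ.sat w t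
  | .next φ, t => φ.sat w (t + 1)
  | .untl φ ψ, t => ∃ t', t ≤ t' ∧ ψ.sat w t' ∧ ∀ t'', t ≤ t'' → t'' < t' → φ.sat w t''

/-- Atomic propositions: predicate terms and update terms. -/
abbrev AP (I C F : Type) := FTerm I C F ⊕ (C × FTerm I C F)

/-- The LTL formula obtained from a TSL(T) formula by treating predicate and
update terms as atomic propositions. -/
def TSL.toLTL : TSL I C F → LTL (AP I C F)
  | .pred τ => .atom (.inl τ)
  | .upd c τ => .atom (.inr (c, τ))
  | .not φ => .not φ.toLTL
  | .and φ ψ => .and φ.toLTL ψ.toLTL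
  | .next φ => .next φ.toLTL
  | .untl φ ψ => .untl φ.toLTL ψ.toLTL

/-- `SeqW T init ζ ρ υ t` is the set of predicate terms of `ρ` and update terms of `υ`
that hold at time `t` of the computation `ζ`. -/
def SeqW (T : Thy V F) (init : Assign V I C) (ζ : ℕ → Assign V I C)
    (ρ : Set (FTerm I C F)) (υ : Set (C × FTerm I C F)) : ℕ → Set (AP I C F) :=
  fun t => {a | Sum.elim
    (fun τ => τ ∈ ρ ∧ TSL.sat T init ζ (.pred τ) t)
    (fun u => u ∈ υ ∧ TSL.sat T init ζ (.upd u.1 u.2) t) a}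

/-! ### Program statements, matching, feasibility -/

/-- Basic program statements. -/
inductive Stmt0 (I C F : Type) : Type where
  | assert : FTerm I C F → Stmt0 I C F
  | assign : C → FTerm I C F → Stmt0 I C F
  | havoc : C → Stmt0 I C F

/-- Program statements: nonempty finite sequences of basic statements. -/
abbrev Stmt (I C F : Type) := {l : List (Stmt0 I C F) // l ≠ []}

/-- A computation matches a trace of basic statements at time `t`. -/
def matchesAt (T : Thy V F) (init : Assign V I C) (ζ : ℕ → Assign V I C)
    (σ : ℕ → Stmt0 I C F) (t : ℕ) : Prop :=
  match σ t with
  | .assert τ => τ.eval T (prevA init ζ t) = T.vtrue ∧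
      ∀ c : C, ζ t (.inr c) = prevA init ζ t (.inr c)
  | .assign c τ => ζ t (.inr c) = τ.eval T (prevA init ζ t) ∧
      ∀ c', c' ≠ c → ζ t (.inr c') = prevA init ζ t (.inr c')
  | .havoc c => ∀ c', c' ≠ c → ζ t (.inr c') = prevA init ζ t (.inr c')

/-- A computation matches a trace of basic statements. -/
def Matches (T : Thy V F) (init : Assign V I C) (ζ : ℕ → Assign V I C)
    (σ : ℕ → Stmt0 I C F) : Prop :=
  ∀ t, matchesAt T init ζ σ t

/-- Position (index of the statement, offset inside it) of the `j`-th basic statement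
in the flattening of a trace of composed statements. -/
def fpos (σ : ℕ → Stmt I C F) : ℕ → ℕ × ℕ
  | 0 => (0, 0)
  | j + 1 =>
    let p := fpos σ j
    if p.2 + 1 < ((σ p.1).1).length then (p.1, p.2 + 1) else (p.1 + 1, 0)

/-- The flattening of a trace of composed statements into basic statements. -/
def flatten (σ : ℕ → Stmt I C F) (j : ℕ) : Stmt0 I C F :=
  ((σ (fpos σ j).1).1).getD (fpos σ j).2 (((σ (fpos σ j).1).1).head (σ (fpos σ j).1).2)

/-- A computation matches a trace of composed statements (via its flattening). -/
def MatchesC (T : Thy V F) (init : Assign V I C) (ζ : ℕ → Assign V I C)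
    (σ : ℕ → Stmt I C F) : Prop :=
  Matches T init ζ (flatten σ)

/-- A trace of composed statements is feasible if some computation matches it. -/
def Feasible (T : Thy V F) (init : Assign V I C) (σ : ℕ → Stmt I C F) : Prop :=
  ∃ ζ, MatchesC T init ζ σ

/-- A trace of basic statements is feasible if some computation matches it. -/
def Feasible0 (T : Thy V F) (init : Assign V I C) (σ : ℕ → Stmt0 I C F) : Prop :=
  ∃ ζ, Matches T init ζ σ

/-! ### Büchi automata -/

/-- A Büchi automaton. -/
structure Buchi (A : Type) (Q : Type) where
  q0 : Q
  δ : Q → A → Q → Prop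
  Acc : Set Q

/-- A run of a Büchi automaton on a word. -/
def Buchi.IsRun {A Q : Type} (B : Buchi A Q) (σ : ℕ → A) (r : ℕ → Q) : Prop :=
  r 0 = B.q0 ∧ ∀ t, B.δ (r t) (σ t) (r (t + 1))

/-- Büchi acceptance: some run visits accepting states infinitely often. -/
def Buchi.Accepts {A Q : Type} (B : Buchi A Q) (σ : ℕ → A) : Prop :=
  ∃ r, B.IsRun σ r ∧ ∀ n, ∃ m, n ≤ m ∧ r m ∈ B.Acc

/-- A program automaton over basic statements satisfies a TSL(T) formula if every
computation matching an accepted trace satisfies the formula. -/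
def SatisfiesTSL {Qp : Type} (T : Thy V F) (init : Assign V I C)
    (P : Buchi (Stmt0 I C F) Qp) (φ : TSL I C F) : Prop :=
  ∀ σ, P.Accepts σ → ∀ ζ, Matches T init ζ σ → φ.sat T init ζ 0

/-! ### The combine construction and the Büchi program product -/

/-- Extended cell set: original cells, inputs-as-cells, and fresh `tmp` cells. -/
abbrev CStar (I C : Type) := (C ⊕ I) ⊕ ℕ

/-- Embedding of terms over inputs/cells into terms over the extended cell set. -/
def FTerm.embed : FTerm I C F → FTerm Empty (CStar I C) F
  | .inp i => .cell (.inl (.inr i))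
  | .cell c => .cell (.inl (.inl c))
  | .app f ts => .app f (ts.attach.map fun t => t.1.embed)
decreasing_by
  have := List.sizeOf_lt_of_mem t.2
  simp only [FTerm.app.sizeOf_spec]
  omega

/-- Embedding of basic statements into statements over the extended cell set. -/
def Stmt0.embed : Stmt0 I C F → Stmt0 Empty (CStar I C) F
  | .assert τ => .assert τ.embed
  | .assign c τ => .assign (.inl (.inl c)) τ.embed
  | .havoc c => .havoc (.inl (.inl c))

/-- Conjunction of a list of terms (via the theory's conjunction symbol). -/
def conjTerm (T : Thy V F) (O : Ops V F T) :
    List (FTerm Empty (CStar I C) F) → FTerm Empty (CStar I C) F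
  | [] => .app O.ftrue []
  | τ :: ts => .app O.fand [τ, conjTerm T O ts]

/-- The `combine` construction: `save_values; s; new_inputs; check_preds_l; check_updates_l`. -/
noncomputable def combine (T : Thy V F) (O : Ops V F T) (ρ : List (FTerm I C F))
    (υ : List (C × FTerm I C F)) (inps : List I)
    (s : List (Stmt0 I C F)) (l : Set (AP I C F)) : Stmt Empty (CStar I C) F :=
  ⟨(υ.mapIdx fun j u => Stmt0.assign (Sum.inr j) u.2.embed)
    ++ s.map Stmt0.embed
    ++ (inps.map fun i => Stmt0.havoc (Sum.inl (Sum.inr i)))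
    ++ [Stmt0.assert (conjTerm T O
          (ρ.map fun τ => if Sum.inl τ ∈ l then τ.embed else .app O.fneg [τ.embed])),
        Stmt0.assert (conjTerm T O
          (υ.mapIdx fun j u =>
            let eqt : FTerm Empty (CStar I C) F :=
              .app O.feq [.cell (Sum.inl (Sum.inl u.1)), .cell (Sum.inr j)]
            if Sum.inr u ∈ l then eqt else .app O.fneg [eqt]))],
    by simp⟩

/-- Lifting an automaton over basic statements to an automaton over (composed) statements. -/
def liftB {Qp : Type} (P : Buchi (Stmt0 I C F) Qp) : Buchi (Stmt I C F) Qp where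
  q0 := P.q0
  δ := fun q w q' => ∃ s, P.δ q s q' ∧ w = ⟨[s], by simp⟩
  Acc := P.Acc

/-- The combined product `P ⊗ A` of a program automaton and a Büchi automaton over
sets of predicate/update terms. -/
noncomputable def product {Qp Qa : Type} (T : Thy V F) (O : Ops V F T)
    (P : Buchi (Stmt I C F) Qp) (A : Buchi (Set (AP I C F)) Qa)
    (ρ : List (FTerm I C F)) (υ : List (C × FTerm I C F)) (inps : List I) :
    Buchi (Stmt Empty (CStar I C) F) (Qp × Qa) where
  q0 := (P.q0, A.q0)
  δ := fun x w y => ∃ s l, P.δ x.1 s y.1 ∧ A.δ x.2 l y.2 ∧ w = combine T O ρ υ inps s.1 l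
  Acc := {x | x.2 ∈ A.Acc}

/-! ### HyperTSL(T) -/

/-- HyperTSL(T) formulas: a quantifier prefix over trace variables, followed by a
quantifier-free formula over trace-indexed inputs and cells. -/
inductive HyperTSL (I C F Pi : Type) : Type where
  | qf : TSL (I × Pi) (C × Pi) F → HyperTSL I C F Pi
  | all : Pi → HyperTSL I C F Pi → HyperTSL I C F Pi
  | ex : Pi → HyperTSL I C F Pi → HyperTSL I C F Pi

/-- Extension `ζ̂[π, ζ]` of a hyper-computation by a computation for trace variable `π`. -/
noncomputable def extendH (ζh : ℕ → Assign V (I × Pi) (C × Pi)) (π : Pi)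
    (ζ : ℕ → Assign V I C) : ℕ → Assign V (I × Pi) (C × Pi) :=
  fun t x =>
    match x with
    | .inl (i, π') => if π' = π then ζ t (.inl i) else ζh t (.inl (i, π'))
    | .inr (c, π') => if π' = π then ζ t (.inr c) else ζh t (.inr (c, π'))

/-- Satisfaction of a HyperTSL(T) formula. -/
noncomputable def HyperTSL.sat (T : Thy V F) (init : Assign V (I × Pi) (C × Pi))
    (Z : Set (ℕ → Assign V I C)) :
    HyperTSL I C F Pi → (ℕ → Assign V (I × Pi) (C × Pi)) → ℕ → Prop
  | .qf ψ, ζh, t => ψ.sat T init ζh t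
  | .all π φ, ζh, t => ∀ ζ ∈ Z, φ.sat T init Z (extendH ζh π ζ) t
  | .ex π φ, ζh, t => ∃ ζ ∈ Z, φ.sat T init Z (extendH ζh π ζ) t

/-- Lift an assignment to a hyper-assignment (every trace gets the same values). -/
def liftInit (init : Assign V I C) : Assign V (I × Pi) (C × Pi) :=
  fun x => match x with
  | .inl (i, _) => init (.inl i)
  | .inr (c, _) => init (.inr c)

/-- The set of computations matching accepted traces of a program automaton. -/
def Zof {Qp : Type} (T : Thy V F) (init : Assign V I C)
    (P : Buchi (Stmt0 I C F) Qp) : Set (ℕ → Assign V I C) :=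
  {ζ | ∃ σ, P.Accepts σ ∧ Matches T init ζ σ}

/-- A program automaton satisfies a HyperTSL(T) formula. -/
noncomputable def SatisfiesHyper {Qp : Type} (T : Thy V F) (init : Assign V I C)
    (P : Buchi (Stmt0 I C F) Qp) (φ : HyperTSL I C F Pi) : Prop :=
  φ.sat T (liftInit init) (Zof T init P) (fun _ => liftInit init) 0

/-- Renaming of terms: cell `c` becomes `c_π`, input `i` becomes `i_π`. -/
def FTerm.rename (π : Pi) : FTerm I C F → FTerm (I × Pi) (C × Pi) F
  | .inp i => .inp (i, π)
  | .cell c => .cell (c, π)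
  | .app f ts => .app f (ts.attach.map fun t => t.1.rename π)
decreasing_by
  have := List.sizeOf_lt_of_mem t.2
  simp only [FTerm.app.sizeOf_spec]
  omega

/-- Renaming of basic statements to a trace variable. -/
def Stmt0.rename (π : Pi) : Stmt0 I C F → Stmt0 (I × Pi) (C × Pi) F
  | .assert τ => .assert (τ.rename π)
  | .assign c τ => .assign (c, π) (τ.rename π)
  | .havoc c => .havoc (c, π)

/-- The `n`-fold self-composition of a program automaton. -/
def selfComp {Qp : Type} (P : Buchi (Stmt0 I C F) Qp) (n : ℕ) :
    Buchi (Stmt (I × Fin n) (C × Fin n) F) (Fin n → Qp) where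
  q0 := fun _ => P.q0
  δ := fun q w q' => ∃ ss : Fin n → Stmt0 I C F,
        (∀ j, P.δ (q j) (ss j) (q' j)) ∧
        w.1 = (List.finRange n).map fun j => (ss j).rename j
  Acc := Set.univ

/-- The `m`-fold self-composition, using the first `m` of `n` trace variables. -/
def selfCompInto {Qp : Type} (P : Buchi (Stmt0 I C F) Qp) (m n : ℕ) (h : m ≤ n) :
    Buchi (Stmt (I × Fin n) (C × Fin n) F) (Fin m → Qp) where
  q0 := fun _ => P.q0
  δ := fun q w q' => ∃ ss : Fin m → Stmt0 I C F,
        (∀ j, P.δ (q j) (ss j) (q' j)) ∧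
        w.1 = (List.finRange m).map fun j => (ss j).rename (Fin.castLE h j)
  Acc := Set.univ

end TSLMC

/-! ### k-feasibility and the automaton `P_k` -/

namespace TSLMC
open scoped Classical
variable {V I C F Pi : Type}

/-- The statement `assert(true)`. -/
def trueStmt (T : Thy V F) (O : Ops V F T) : Stmt I C F :=
  ⟨[.assert (.app O.ftrue [])], by simp⟩

/-- Extend a finite window of statements by `assert(true)^ω`. -/
def extendTrue (T : Thy V F) (O : Ops V F T) (ss : List (Stmt I C F)) : ℕ → Stmt I C F :=
  fun t => if h : t < ss.length then ss.get ⟨t, h⟩ else trueStmt T O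

/-- A finite window of statements is feasible if, followed by `assert(true)^ω`, it is
feasible for some initial assignment. -/
def WinFeasible (T : Thy V F) (O : Ops V F T) (ss : List (Stmt I C F)) : Prop :=
  ∃ init : Assign V I C, Feasible T init (extendTrue T O ss)

/-- The window `σ_j … σ_{j+k-1}` of a trace. -/
def window (σ : ℕ → α) (j k : ℕ) : List α :=
  (List.range k).map fun i => σ (j + i)

/-- A trace is `k`-feasible if no window of `k` consecutive statements is infeasible
for all initial assignments. -/
def KFeasible (T : Thy V F) (O : Ops V F T) (k : ℕ) (σ : ℕ → Stmt I C F) : Prop :=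
  ∀ j, WinFeasible T O (window σ j k)

/-- Chains of transitions of an automaton. -/
def chain {S Qp : Type} (P : Buchi S Qp) : Qp → List (S × Qp) → Prop
  | _, [] => True
  | q, (s, q') :: rest => P.δ q s q' ∧ chain P q' rest

/-- The last state of an alternating state/statement sequence. -/
def lastQ {S Qp : Type} (st : Qp × List (S × Qp)) : Qp :=
  (st.2.getLast?).elim st.1 Prod.snd

/-- The statements of an alternating state/statement sequence. -/
def stmts {S Qp : Type} (st : Qp × List (S × Qp)) : List S :=
  st.2.map Prod.fst

/-- Valid states of `P_k`: chains of transitions of `P` of length `k-1`, or shorter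
ones starting at the initial state. -/
def ValidSt {S Qp : Type} (P : Buchi S Qp) (k : ℕ) (st : Qp × List (S × Qp)) : Prop :=
  chain P st.1 st.2 ∧ (st.2.length = k - 1 ∨ (st.2.length < k - 1 ∧ st.1 = P.q0))

/-- Extend an alternating sequence by a transition, dropping the first entry if the
window is full. -/
def push {S Qp : Type} (k : ℕ) (st : Qp × List (S × Qp)) (s : S) (q' : Qp) :
    Qp × List (S × Qp) :=
  let l' := st.2 ++ [(s, q')]
  if k ≤ l'.length then
    match l' with
    | [] => (st.1, [])
    | e :: rest => (e.2, rest)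
  else (st.1, l')

/-- The automaton `P_k`: `P` without `k`-infeasibility. -/
def Pk {Qp : Type} (T : Thy V F) (O : Ops V F T) (P : Buchi (Stmt I C F) Qp) (k : ℕ) :
    Buchi (Stmt I C F) (Qp × List (Stmt I C F × Qp)) where
  q0 := (P.q0, [])
  δ := fun st s st' => ValidSt P k st ∧ ValidSt P k st' ∧
        ∃ q', P.δ (lastQ st) s q' ∧ WinFeasible T O (stmts st ++ [s]) ∧ st' = push k st s q'
  Acc := {st | lastQ st ∈ P.Acc}

/-! ### Infeasible accepting cycles and their removal -/

/-- The trace `(s₁ … s_n)^ω` of a cycle. -/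
def cycTrace (T : Thy V F) (O : Ops V F T) {Qp : Type}
    (ϱ : List (Qp × Stmt I C F × Qp)) : ℕ → Stmt I C F :=
  fun t => ((ϱ[t % ϱ.length]?).map fun e => e.2.1).getD (trueStmt T O)

/-- `ϱ` is a cycle of transitions of `B`. -/
def IsCycle {S Qp : Type} (B : Buchi S Qp) (ϱ : List (Qp × S × Qp)) : Prop :=
  ϱ ≠ [] ∧ (∀ e ∈ ϱ, B.δ e.1 e.2.1 e.2.2) ∧
  (∀ i, (h : i + 1 < ϱ.length) →
    (ϱ.get ⟨i + 1, h⟩).1 = (ϱ.get ⟨i, Nat.lt_of_succ_lt h⟩).2.2) ∧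
  ∀ h : ϱ ≠ [], (ϱ.getLast h).2.2 = (ϱ.head h).1

/-- An infeasible accepting cycle. -/
def InfAccCycle {Qp : Type} (T : Thy V F) (O : Ops V F T)
    (B : Buchi (Stmt I C F) Qp) (ϱ : List (Qp × Stmt I C F × Qp)) : Prop :=
  IsCycle B ϱ ∧ (∃ e ∈ ϱ, e.1 ∈ B.Acc) ∧
  ∀ init : Assign V I C, ¬ Feasible T init (cycTrace T O ϱ)

/-- A trace ends with the infinite repetition of the statements of the cycle `ϱ`. -/
def EndsWithCyc {Qp : Type} (T : Thy V F) (O : Ops V F T)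
    (σ : ℕ → Stmt I C F) (ϱ : List (Qp × Stmt I C F × Qp)) : Prop :=
  ∃ N, ∀ j, σ (N + j) = cycTrace T O ϱ j

/-- The automaton `A_ϱ`, accepting exactly the traces ending with `ϱ^ω`. -/
def cycAut {Qp : Type} (ϱ : List (Qp × Stmt I C F × Qp)) :
    Buchi (Stmt I C F) (Option (Fin ϱ.length)) where
  q0 := none
  δ := fun st s st' =>
    match st with
    | none => st' = none ∨ ∃ h : ϱ ≠ [],
        s = (ϱ.head h).2.1 ∧
        st' = some ⟨1 % ϱ.length, Nat.mod_lt _ (List.length_pos_iff.mpr h)⟩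
    | some i => s = (ϱ.get i).2.1 ∧
        st' = some ⟨((i : ℕ) + 1) % ϱ.length,
          Nat.mod_lt _ (Nat.lt_of_le_of_lt (Nat.zero_le _) i.isLt)⟩
  Acc := {st | st ≠ none}

/-- A Büchi automaton bundled with its state type. -/
structure BAut (A : Type) : Type 1 where
  Q : Type
  B : Buchi A Q

/-- One removal step: remove (the languages of the automata `A_ϱ` for) a set of
infeasible accepting cycles from an automaton. -/
def RemStep (T : Thy V F) (O : Ops V F T) (x y : BAut (Stmt I C F)) : Prop :=
  ∃ Cset : Set (List (x.Q × Stmt I C F × x.Q)),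
    (∀ ϱ ∈ Cset, InfAccCycle T O x.B ϱ) ∧
    ∀ σ, y.B.Accepts σ ↔ (x.B.Accepts σ ∧ ∀ ϱ ∈ Cset, ¬ EndsWithCyc T O σ ϱ)

/-- `k'` iterations of removing infeasible accepting cycles. -/
def RemChain (T : Thy V F) (O : Ops V F T) :
    ℕ → BAut (Stmt I C F) → BAut (Stmt I C F) → Prop
  | 0, x, y => y = x
  | k' + 1, x, y => ∃ z, RemChain T O k' x z ∧ RemStep T O z y

/-- The universal projection of (a refinement of) the combined product: keep the first
`m` of the `n` statements of each `combine`-labelled transition. -/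
noncomputable def projU {Q' : Type} (T : Thy V F) (O : Ops V F T) {m n : ℕ}
    (_hm : 0 < m) (hmn : m ≤ n)
    (ρ : List (FTerm (I × Fin n) (C × Fin n) F))
    (υ : List ((C × Fin n) × FTerm (I × Fin n) (C × Fin n) F))
    (inps : List (I × Fin n))
    (B : Buchi (Stmt Empty (CStar (I × Fin n) (C × Fin n)) F) Q') :
    Buchi (Stmt (I × Fin n) (C × Fin n) F) Q' where
  q0 := B.q0
  δ := fun q w q' => ∃ (ss : Fin n → Stmt0 (I × Fin n) (C × Fin n) F)
        (l : Set (AP (I × Fin n) (C × Fin n) F)),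
        B.δ q (combine T O ρ υ inps ((List.finRange n).map ss) l) q' ∧
        w.1 = (List.finRange m).map fun j => ss (Fin.castLE hmn j)
  Acc := B.Acc

/-- The formula `∀π₁ … ∀π_m ∃π_{m+1} … ∃π_n. ψ`. -/
def AEform (m n : ℕ) (ψ : TSL (I × Fin n) (C × Fin n) F) : HyperTSL I C F (Fin n) :=
  (List.finRange n).foldr
    (fun (j : Fin n) acc => if (j : ℕ) < m then HyperTSL.all j acc else HyperTSL.ex j acc)
    (.qf ψ)

end TSLMC
/-! ### Reduced and adapted computations -/

namespace TSLMC
open scoped Classical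
variable {V I C F Pi : Type}

/-- The index `ι(t) = B·(t+1) − 3` for blocks of length `B`. -/
def iotaIdx (B t : ℕ) : ℕ := B * (t + 1) - 3

/-- The reduced computation: the combined computation at the indices `ι(t)`,
restricted to the original inputs and cells. -/
def reduceC (B : ℕ) (ζ : ℕ → Assign V Empty (CStar I C)) : ℕ → Assign V I C :=
  fun t x => ζ (iotaIdx B t) (.inr (.inl x.swap))

/-- The reduced computation of trace variable `j`: the combined hyper-computation at
the indices `ι(t)`, restricted to the `j`-indexed inputs and cells, renamed back. -/
def reduceTr {n : ℕ} (B : ℕ) (j : Fin n)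
    (ζ : ℕ → Assign V Empty (CStar (I × Fin n) (C × Fin n))) : ℕ → Assign V I C :=
  fun t x => ζ (iotaIdx B t)
    (.inr (.inl (match x with | .inl i => .inr (i, j) | .inr c => .inl (c, j))))

/-- Assembling a hyper-computation from one computation per trace variable
(`∅[π₁, ζ₁]…[π_n, ζ_n]`). -/
def assembleH {n : ℕ} (red : Fin n → ℕ → Assign V I C) :
    ℕ → Assign V (I × Fin n) (C × Fin n) :=
  fun t x => match x with
  | .inl (i, j) => red j t (.inl i)
  | .inr (c, j) => red j t (.inr c)

/-- The adapted computation `ζ̃` of a computation `ζ`. -/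
noncomputable def adapt (T : Thy V F) (upds : List (C × FTerm I C F)) (inps : List I)
    (init : Assign V I C) (initC : Assign V Empty (CStar I C))
    (ζ : ℕ → Assign V I C) : ℕ → Assign V Empty (CStar I C) := fun idx x =>
  let m := upds.length
  let k := inps.length
  let b := idx / (m + k + 3)
  let i := idx % (m + k + 3)
  let newTmp : ℕ → V := fun p =>
    ((upds[p]?).map fun u => u.2.eval T (prevA init ζ b)).getD (initC (.inr (.inr p)))
  let oldTmp : ℕ → V := fun p =>
    match b with
    | 0 => initC (.inr (.inr p))
    | b' + 1 => ((upds[p]?).map fun u => u.2.eval T (prevA init ζ b')).getD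
        (initC (.inr (.inr p)))
  match x with
  | .inl e => e.elim
  | .inr (.inr p) => if i < m then (if p ≤ i then newTmp p else oldTmp p) else newTmp p
  | .inr (.inl (.inl c)) => if i < m then prevA init ζ b (.inr c) else ζ b (.inr c)
  | .inr (.inl (.inr ii)) =>
      if i < m + 1 then prevA init ζ b (.inl ii)
      else if i ≤ m + k then
        (if inps.idxOf ii < i - m then ζ b (.inl ii) else prevA init ζ b (.inl ii))
      else ζ b (.inl ii)

/-- The adapted hyper-computation of computations `ζ_{π₁}, …, ζ_{π_n}`. -/
noncomputable def hadapt {n : ℕ} (T : Thy V F)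
    (upds : List ((C × Fin n) × FTerm (I × Fin n) (C × Fin n) F))
    (inps : List (I × Fin n)) (init : Assign V I C)
    (initC : Assign V Empty (CStar (I × Fin n) (C × Fin n)))
    (ζs : Fin n → ℕ → Assign V I C) :
    ℕ → Assign V Empty (CStar (I × Fin n) (C × Fin n)) := fun idx x =>
  let m := upds.length
  let k := inps.length
  let b := idx / (m + n + k + 2)
  let i := idx % (m + n + k + 2)
  let ζ' : ℕ → Assign V (I × Fin n) (C × Fin n) := assembleH ζs
  let hinit : Assign V (I × Fin n) (C × Fin n) := liftInit init
  let newTmp : ℕ → V := fun p =>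
    ((upds[p]?).map fun u => u.2.eval T (prevA hinit ζ' b)).getD (initC (.inr (.inr p)))
  let oldTmp : ℕ → V := fun p =>
    match b with
    | 0 => initC (.inr (.inr p))
    | b' + 1 => ((upds[p]?).map fun u => u.2.eval T (prevA hinit ζ' b')).getD
        (initC (.inr (.inr p)))
  match x with
  | .inl e => e.elim
  | .inr (.inr p) => if i < m then (if p ≤ i then newTmp p else oldTmp p) else newTmp p
  | .inr (.inl (.inl cj)) =>
      if i < m then prevA hinit ζ' b (.inr cj)
      else if i < m + n then
        (if (cj.2 : ℕ) < i - m + 1 then ζs cj.2 b (.inr cj.1)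
         else prevA hinit ζ' b (.inr cj))
      else ζ' b (.inr cj)
  | .inr (.inl (.inr ij)) =>
      if i < m + n then prevA hinit ζ' b (.inl ij)
      else if i < m + n + k then
        (if inps.idxOf ij < i - (m + n) + 1 then ζ' b (.inl ij)
         else prevA hinit ζ' b (.inl ij))
      else ζ' b (.inl ij)

/-- The composed trace `σ_t = ((σ_{π₁})_{π₁})_t; … ; ((σ_{π_n})_{π_n})_t`. -/
def composedTrace {n : ℕ} (σs : Fin n → ℕ → Stmt0 I C F) (t : ℕ) :
    List (Stmt0 (I × Fin n) (C × Fin n) F) :=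
  (List.finRange n).map fun j => (σs j t).rename j

/-- The composed trace, as a trace of (nonempty) program statements. -/
def composedStmt {n : ℕ} (hn : 0 < n) (σs : Fin n → ℕ → Stmt0 I C F) (t : ℕ) :
    Stmt (I × Fin n) (C × Fin n) F :=
  ⟨composedTrace σs t, by
    intro h
    have := congrArg List.length h
    simp [composedTrace] at this
    omega⟩

end TSLMC

namespace TSLMC
open scoped Classical

/-! In every block of `combine`, the original cells change only at the embedded statement
of `σ` and the inputs only at the havocs; `ι(t)` is the last havoc of block `t`. So the state
just before the embedded statement of block `t` restricts to `ζ|σ` at `t - 1` (or to the initial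
assignment), and `ζ|σ` at `t` agrees on the cells with the state just after it. -/

variable {V I C F : Type}

theorem FTerm.eval_app (T : Thy V F) (a : Assign V I C) (f : F) (ts : List (FTerm I C F)) :
    (FTerm.app f ts).eval T a = T.ε f (ts.map fun t => t.eval T a) := by
  rw [FTerm.eval]
  simp

theorem FTerm.embed_app (f : F) (ts : List (FTerm I C F)) :
    (FTerm.app f ts).embed = FTerm.app f (ts.map FTerm.embed) := by
  rw [FTerm.embed]
  simp

def Assign.restrictCStar (a : Assign V Empty (CStar I C)) : Assign V I C :=
  fun y => a (.inr (.inl y.swap))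

theorem FTerm.eval_embed (T : Thy V F) (a : Assign V Empty (CStar I C)) :
    ∀ τ : FTerm I C F, τ.embed.eval T a = τ.eval T a.restrictCStar
  | .inp i => by simp [FTerm.embed, FTerm.eval, Assign.restrictCStar]
  | .cell c => by simp [FTerm.embed, FTerm.eval, Assign.restrictCStar]
  | .app f ts => by
    rw [FTerm.embed_app, FTerm.eval_app, FTerm.eval_app, List.map_map]
    exact congrArg _ (List.map_congr_left fun t _ => FTerm.eval_embed T a t)

def Stmt0.Step (T : Thy V F) : Stmt0 I C F → Assign V I C → Assign V I C → Prop
  | .assert τ, a, b => τ.eval T a = T.vtrue ∧ ∀ c, b (.inr c) = a (.inr c)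
  | .assign c τ, a, b => b (.inr c) = τ.eval T a ∧ ∀ c', c' ≠ c → b (.inr c') = a (.inr c')
  | .havoc c, a, b => ∀ c', c' ≠ c → b (.inr c') = a (.inr c')

def Stmt0.target : Stmt0 I C F → Option C
  | .assert _ => none
  | .assign c _ => some c
  | .havoc c => some c

theorem matchesAt_iff_step {T : Thy V F} {init : Assign V I C} {ζ : ℕ → Assign V I C}
    {σ : ℕ → Stmt0 I C F} {t : ℕ} :
    matchesAt T init ζ σ t ↔ (σ t).Step T (prevA init ζ t) (ζ t) := by
  unfold matchesAt
  cases σ t <;> rfl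

namespace Stmt0.Step

variable {T : Thy V F} {s : Stmt0 I C F} {a b : Assign V I C}

theorem apply_eq_of_target_ne (h : s.Step T a b) {c : C} (hc : s.target ≠ some c) :
    b (.inr c) = a (.inr c) := by
  cases s with
  | assert τ => exact h.2 c
  | assign c' τ => exact h.2 c fun e => hc (e ▸ rfl)
  | havoc c' => exact h c fun e => hc (e ▸ rfl)

theorem congr_cells (h : s.Step T a b) {b' : Assign V I C}
    (hb : ∀ c, b' (.inr c) = b (.inr c)) : s.Step T a b' := by
  cases s with
  | assert τ => exact ⟨h.1, fun c => (hb c).trans (h.2 c)⟩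
  | assign c τ => exact ⟨(hb c).trans h.1, fun c' hc' => (hb c').trans (h.2 c' hc')⟩
  | havoc c => exact fun c' hc' => (hb c').trans (h c' hc')

theorem of_embed {a b : Assign V Empty (CStar I C)} (h : s.embed.Step T a b) :
    s.Step T a.restrictCStar b.restrictCStar := by
  cases s with
  | assert τ =>
    exact ⟨(FTerm.eval_embed T a τ).symm.trans h.1, fun c => h.2 (.inl (.inl c))⟩
  | assign c τ =>
    exact ⟨h.1.trans (FTerm.eval_embed T a τ),
      fun c' hc' => h.2 (.inl (.inl c')) (by simpa using hc')⟩
  | havoc c => exact fun c' hc' => h (.inl (.inl c')) (by simpa using hc')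

end Stmt0.Step

theorem Matches.prevA_eq_of_target_ne {T : Thy V F} {init : Assign V I C}
    {ζ : ℕ → Assign V I C} {σ : ℕ → Stmt0 I C F} (h : Matches T init ζ σ) {c : C} {a b : ℕ}
    (hab : a ≤ b) (hc : ∀ j, a ≤ j → j < b → (σ j).target ≠ some c) :
    prevA init ζ b (.inr c) = prevA init ζ a (.inr c) := by
  induction b, hab using Nat.le_induction with
  | base => rfl
  | succ b hab ih =>
    rw [← ih fun j hj hjb => hc j hj (by omega)]
    exact (matchesAt_iff_step.1 (h b)).apply_eq_of_target_ne (hc b hab (by omega))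

theorem fpos_of_length_eq (σ : ℕ → Stmt I C F) {B : ℕ} (hB : 0 < B)
    (hlen : ∀ t, (σ t).1.length = B) (j : ℕ) : fpos σ j = (j / B, j % B) := by
  induction j with
  | zero => simp [fpos]
  | succ j ih =>
    rw [fpos, ih, hlen]
    have hj := Nat.div_add_mod j B
    have hr := Nat.mod_lt j hB
    by_cases hc : j % B + 1 < B
    · have hsucc : j + 1 = (j % B + 1) + B * (j / B) := by omega
      rw [if_pos hc, hsucc, Nat.add_mul_div_left _ _ hB, Nat.div_eq_of_lt hc,
        Nat.add_mul_mod_self_left, Nat.mod_eq_of_lt hc, zero_add]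
    · have hsucc : j + 1 = B * (j / B + 1) := by rw [Nat.mul_succ]; omega
      rw [if_neg hc, hsucc, Nat.mul_div_cancel_left _ hB, Nat.mul_mod_right]

theorem flatten_mul_add (σ : ℕ → Stmt I C F) {B : ℕ} (hlen : ∀ t, (σ t).1.length = B)
    (q : ℕ) {r : ℕ} (hr : r < B) :
    flatten σ (B * q + r) = (σ q).1[r]'(by rw [hlen]; exact hr) := by
  have hB : 0 < B := by omega
  have hdiv : (B * q + r) / B = q := by rw [Nat.mul_add_div hB, Nat.div_eq_of_lt hr, add_zero]
  have hmod : (B * q + r) % B = r := by rw [Nat.mul_add_mod, Nat.mod_eq_of_lt hr]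
  unfold flatten
  simp only [fpos_of_length_eq σ hB hlen, hdiv, hmod]
  exact List.getD_eq_getElem _ _ _

theorem iotaIdx_add_three_add_one (n t : ℕ) :
    iotaIdx (n + 3) t + 1 = (n + 3) * t + (n + 1) := by
  rw [iotaIdx, Nat.mul_succ]
  omega

section Combine

variable (T : Thy V F) (O : Ops V F T) (ρ : List (FTerm I C F)) (υ : List (C × FTerm I C F))
  (inps : List I) (s : Stmt0 I C F) (l : Set (AP I C F))

theorem combine_length :
    (combine T O ρ υ inps [s] l).1.length = inps.length + υ.length + 3 := by
  simp [combine]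
  omega

theorem target_combine_getElem_of_lt {r : ℕ} (hr : r < υ.length) :
    ((combine T O ρ υ inps [s] l).1[r]'(by rw [combine_length]; omega)).target
      = some (.inr r) := by
  unfold combine
  rw [List.getElem_append_left, List.getElem_append_left, List.getElem_append_left,
    List.getElem_mapIdx]
  · rfl
  all_goals simpa using by omega

theorem combine_getElem_length :
    (combine T O ρ υ inps [s] l).1[υ.length]'(by rw [combine_length]; omega) = s.embed := by
  unfold combine
  rw [List.getElem_append_left, List.getElem_append_left, List.getElem_append_right]
  all_goals simp

theorem target_combine_getElem_of_havoc {r : ℕ} (h₁ : υ.length < r)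
    (h₂ : r ≤ υ.length + inps.length) :
    ((combine T O ρ υ inps [s] l).1[r]'(by rw [combine_length]; omega)).target
      = some (.inl (.inr (inps[r - (υ.length + 1)]'(by omega)))) := by
  unfold combine
  rw [List.getElem_append_left, List.getElem_append_right, List.getElem_map]
  · simp
    rfl
  all_goals simpa using by omega

theorem target_combine_getElem_of_assert {r : ℕ} (h₁ : υ.length + inps.length < r)
    (h₂ : r < inps.length + υ.length + 3) :
    ((combine T O ρ υ inps [s] l).1[r]'(by rw [combine_length]; omega)).target = none := by
  unfold combine
  rw [List.getElem_append_right]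
  · simp only [List.length_append, List.length_map, List.length_mapIdx, List.length_cons,
      List.length_nil]
    obtain he | he : r - (υ.length + 1 + inps.length) = 0 ∨
        r - (υ.length + 1 + inps.length) = 1 := by omega
    all_goals simp only [he]; rfl
  · simp; omega

theorem target_combine_getElem_ne_inl {r : ℕ} (hr : r < inps.length + υ.length + 3)
    (hr' : r < υ.length ∨ υ.length + inps.length < r) (y : C ⊕ I) :
    ((combine T O ρ υ inps [s] l).1[r]'(by rwa [combine_length])).target ≠ some (.inl y) := by
  rcases hr' with hr' | hr'
  · simp [target_combine_getElem_of_lt T O ρ υ inps s l hr']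
  · simp [target_combine_getElem_of_assert T O ρ υ inps s l hr' hr]

end Combine

section Reduce

variable {T : Thy V F} {O : Ops V F T} {ρ : List (FTerm I C F)} {υ : List (C × FTerm I C F)}
  {inps : List I} {σ : ℕ → Stmt0 I C F} {X : ℕ → Set (AP I C F)}
  {initC : Assign V Empty (CStar I C)} {ζ : ℕ → Assign V Empty (CStar I C)}

local notation "B" => inps.length + υ.length + 3

theorem MatchesC.prevA_combine_eq_of_target_ne
    (h : MatchesC T initC ζ (fun t => combine T O ρ υ inps [σ t] (X t))) {x : CStar I C}
    (q : ℕ) {r₀ r₁ : ℕ} (h₀₁ : r₀ ≤ r₁) (h₁ : r₁ ≤ B)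
    (hx : ∀ r (hr : r < B), r₀ ≤ r → r < r₁ →
      ((combine T O ρ υ inps [σ q] (X q)).1[r]'(by rwa [combine_length])).target ≠ some x) :
    prevA initC ζ (B * q + r₁) (.inr x) = prevA initC ζ (B * q + r₀) (.inr x) := by
  refine Matches.prevA_eq_of_target_ne h (by omega) fun j hj hjr => ?_
  obtain ⟨r, rfl⟩ : ∃ r, j = B * q + r := ⟨j - B * q, by omega⟩
  rw [flatten_mul_add _ (fun t => combine_length ..) q (by omega)]
  exact hx r (by omega) (by omega) (by omega)

theorem MatchesC.reduceC_combine_cell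
    (h : MatchesC T initC ζ (fun t => combine T O ρ υ inps [σ t] (X t))) (t : ℕ) (c : C) :
    reduceC B ζ t (.inr c) = ζ (B * t + υ.length) (.inr (.inl (.inl c))) := by
  show prevA initC ζ (iotaIdx B t + 1) _ = prevA initC ζ (B * t + (υ.length + 1)) _
  rw [iotaIdx_add_three_add_one]
  refine h.prevA_combine_eq_of_target_ne t (by omega) (by omega) fun r hr hr₀ hr₁ => ?_
  rw [target_combine_getElem_of_havoc T O ρ υ inps _ _ (by omega) (by omega)]
  simp

theorem MatchesC.restrictCStar_prevA_combine {init : Assign V I C}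
    (hic : ∀ c : C, initC (.inr (.inl (.inl c))) = init (.inr c))
    (hii : ∀ i : I, initC (.inr (.inl (.inr i))) = init (.inl i))
    (h : MatchesC T initC ζ (fun t => combine T O ρ υ inps [σ t] (X t))) (t : ℕ) :
    (prevA initC ζ (B * t + υ.length)).restrictCStar = prevA init (reduceC B ζ) t := by
  funext y
  have hstart : prevA initC ζ (B * t + υ.length) (.inr (.inl y.swap))
      = prevA initC ζ (B * t + 0) (.inr (.inl y.swap)) :=
    h.prevA_combine_eq_of_target_ne t (by omega) (by omega) fun r hr _ hr₁ =>
      target_combine_getElem_ne_inl T O ρ υ inps _ _ hr (.inl hr₁) _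
  rw [Assign.restrictCStar, hstart]
  cases t with
  | zero => cases y <;> simp [prevA, hic, hii]
  | succ t =>
    have hend : prevA initC ζ (B * t + B) (.inr (.inl y.swap))
        = prevA initC ζ (B * t + (inps.length + υ.length + 1)) (.inr (.inl y.swap)) :=
      h.prevA_combine_eq_of_target_ne t (by omega) le_rfl fun r hr hr₀ _ =>
        target_combine_getElem_ne_inl T O ρ υ inps _ _ hr (.inr (by omega)) _
    rw [Nat.mul_succ, add_zero, hend, ← iotaIdx_add_three_add_one]
    rfl

end Reduce

theorem reduced_matches_general
    {V I C F : Type} (T : Thy V F) (O : Ops V F T)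
    (init : Assign V I C) (initC : Assign V Empty (CStar I C))
    (hic : ∀ c : C, initC (.inr (.inl (.inl c))) = init (.inr c))
    (hii : ∀ i : I, initC (.inr (.inl (.inr i))) = init (.inl i))
    (ρ : List (FTerm I C F)) (υ : List (C × FTerm I C F))
    (inps : List I)
    (σ : ℕ → Stmt0 I C F) (X : ℕ → Set (AP I C F))
    (ζ : ℕ → Assign V Empty (CStar I C))
    (h : MatchesC T initC ζ (fun t => combine T O ρ υ inps [σ t] (X t))) :
    Matches T init (reduceC (inps.length + υ.length + 3) ζ) σ := by
  intro t
  have hstep := matchesAt_iff_step.1 (h ((inps.length + υ.length + 3) * t + υ.length))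
  rw [flatten_mul_add _ (fun t => combine_length ..) t (by omega),
    combine_getElem_length] at hstep
  rw [matchesAt_iff_step, ← h.restrictCStar_prevA_combine hic hii t]
  exact hstep.of_embed.congr_cells (h.reduceC_combine_cell t)

theorem reduced_matches
    {V I C F : Type} (T : Thy V F) (O : Ops V F T)
    (init : Assign V I C) (initC : Assign V Empty (CStar I C))
    (hic : ∀ c : C, initC (.inr (.inl (.inl c))) = init (.inr c))
    (hii : ∀ i : I, initC (.inr (.inl (.inr i))) = init (.inl i))
    (ρ : List (FTerm I C F)) (υ : List (C × FTerm I C F))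
    (inps : List I) (hinps : ∀ i : I, i ∈ inps) (hnd : inps.Nodup)
    (σ : ℕ → Stmt0 I C F) (X : ℕ → Set (AP I C F))
    (ζ : ℕ → Assign V Empty (CStar I C))
    (h : MatchesC T initC ζ (fun t => combine T O ρ υ inps [σ t] (X t))) :
    Matches T init (reduceC (inps.length + υ.length + 3) ζ) σ :=
  reduced_matches_general T O init initC hic hii ρ υ inps σ X ζ h

end TSLMC
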